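/- For a subset A of the positive integers, if the asymptotic (natural) density d(A) = lim_{n→∞} |A ∩ {1,...,n}|/n exists, then the Dirichlet density ∂(A) = lim_{s→1+} (Σ_{n∈A} n^{-s})/ζ(s) exists and equals d(A). -/

import Mathlib

open Filter Topology Set

noncomputable def zeta (s : ℝ) : ℝ := ∑' n : ℕ+, (n : ℝ) ^ (-s)

def HasDDensity (A : Set ℕ+) (L : ℝ) : Prop :=
  Tendsto (fun s : ℝ => (∑' n : A, ((n : ℕ+) : ℝ) ^ (-s)) / zeta s) (𝓝[>] 1) (𝓝 L)

def HasDens (A : Set (ℕ+ × ℕ+)) (L : ℝ) : Prop :=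
  Tendsto (fun s : ℝ => (∑' p : A, (((p : ℕ+ × ℕ+).1 : ℝ) * ((p : ℕ+ × ℕ+).2 : ℝ)) ^ (-s)) / (zeta s) ^ 2)
    (𝓝[>] 1) (𝓝 L)

def HasNaturalDensity (A : Set ℕ+) (d : ℝ) : Prop :=
  Tendsto (fun n : ℕ => (Set.ncard {k : ℕ+ | k ∈ A ∧ (k : ℕ) ≤ n} : ℝ) / n) atTop (𝓝 d)

/-!
Let `χ` be the indicator of `A` on `ℕ`. Abel summation turns `∑_{k ≤ n} χ k ~ d n` into
`(s - 1) ∑ χ n n^{-s} → d` as `s → 1⁺`, while `(s - 1) ζ(s) → 1` because `ζ` has residue `1`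
at `s = 1`. Dividing the two limits gives `d`.
-/

lemma LSeries_ofReal_eq_tsum {f : ℕ → ℝ} (hf : f 0 = 0) (s : ℝ) :
    LSeries (fun n ↦ (f n : ℂ)) s = ↑(∑' n : ℕ, f n * (n : ℝ) ^ (-s)) := by
  rw [LSeries, Complex.ofReal_tsum]
  refine tsum_congr fun n ↦ ?_
  rw [LSeries.term_def₀ (by simp [hf]), Complex.ofReal_mul,
    Complex.ofReal_cpow (Nat.cast_nonneg n)]
  norm_cast

lemma tsum_subtype_pnat_eq_tsum_indicator {R : Type*} [NonAssocSemiring R] [TopologicalSpace R]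
    (A : Set ℕ+) (g : ℕ → R) :
    ∑' n : A, g n = ∑' n : ℕ, (PNat.val '' A).indicator 1 n * g n := by
  rw [tsum_subtype A (fun n : ℕ+ ↦ g n), ← tsum_pnat_eq_tsum_of_eq_zero]
  · refine tsum_congr fun n ↦ ?_
    rw [Set.indicator_image PNat.coe_injective]
    by_cases hn : n ∈ A <;> simp [hn]
  · simp

lemma sum_Icc_indicator_eq_ncard {R : Type*} [AddCommMonoidWithOne R] (A : Set ℕ+) (n : ℕ) :
    ∑ k ∈ Finset.Icc 1 n, (PNat.val '' A).indicator (1 : ℕ → R) k =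
      {k : ℕ+ | k ∈ A ∧ (k : ℕ) ≤ n}.ncard := by
  classical
  have himage : PNat.val '' {k : ℕ+ | k ∈ A ∧ (k : ℕ) ≤ n} =
      ↑((Finset.Icc 1 n).filter (· ∈ PNat.val '' A)) := by
    ext m
    simp only [mem_image, mem_ofPred_eq, Finset.coe_filter, Finset.mem_Icc]
    constructor
    · rintro ⟨k, ⟨hk, hkn⟩, rfl⟩
      exact ⟨⟨k.pos, hkn⟩, k, hk, rfl⟩
    · rintro ⟨⟨-, hmn⟩, k, hk, rfl⟩
      exact ⟨k, ⟨hk, hmn⟩, rfl⟩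
  rw [Finset.sum_indicator_eq_sum_filter, ← ncard_image_of_injective _ PNat.coe_injective,
    himage, ncard_coe_finset]
  simp

lemma zeta_eq_tsum_one_div_nat_rpow {s : ℝ} (hs : s ≠ 0) :
    zeta s = ∑' n : ℕ, 1 / (n : ℝ) ^ s := by
  rw [zeta, tsum_pnat_eq_tsum_of_eq_zero (f := fun n : ℕ ↦ (n : ℝ) ^ (-s)) (by simp [hs])]
  exact tsum_congr fun n ↦ by rw [Real.rpow_neg (Nat.cast_nonneg n), one_div]

theorem stmt0 (A : Set ℕ+) (d : ℝ) (h : HasNaturalDensity A d) :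
    HasDDensity A d := by
  set χ : ℕ → ℝ := (PNat.val '' A).indicator 1
  have hχ0 : χ 0 = 0 := indicator_of_notMem (by rintro ⟨k, -, hk⟩; exact k.ne_zero hk) 1
  have hL : Tendsto (fun s : ℝ ↦ (s - 1) * LSeries (fun n ↦ χ n) s) (𝓝[>] 1) (𝓝 d) :=
    LSeries_tendsto_sub_mul_nhds_one_of_tendsto_sum_div_and_nonneg χ
      (by simp only [χ, sum_Icc_indicator_eq_ncard]; exact h)
      (indicator_nonneg fun _ _ ↦ zero_le_one)
  have hA : Tendsto (fun s : ℝ ↦ (s - 1) * ∑' n : A, ((n : ℕ+) : ℝ) ^ (-s)) (𝓝[>] 1) (𝓝 d) := by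
    rw [← tendsto_ofReal_iff]
    refine hL.congr fun s ↦ ?_
    rw [LSeries_ofReal_eq_tsum hχ0, tsum_subtype_pnat_eq_tsum_indicator A fun m ↦ (m : ℝ) ^ (-s)]
    norm_cast
  have hquot := hA.div tendsto_sub_mul_tsum_nat_rpow one_ne_zero
  rw [div_one] at hquot
  refine hquot.congr' ?_
  filter_upwards [self_mem_nhdsWithin] with s (hs : 1 < s)
  rw [Pi.div_apply, zeta_eq_tsum_one_div_nat_rpow (by positivity),
    mul_div_mul_left _ _ (sub_ne_zero.2 hs.ne')]
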